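/- arXiv:1111.0731 — 2 statements merged into one kernel-verified Lean document; each statement's English description precedes it below -/
import Mathlib

section
/- Let (X,x₀) be a pointed topological space and n ≥ 1. For a sequence of continuous pointed maps f_k : (S_k^n, θ) → (X, x₀) (one for each k ∈ ℕ), the map f : (ℍ^n, θ) → (X, x₀) defined by f|_{S_k^n} = f_k is continuous if and only if the family {f_k}_{k∈ℕ} is null-convergent. -/
open scoped unitInterval Topology Topology.Homotopy

noncomputable section

namespace HG

/-- The `k`-th `n`-sphere `Sₖⁿ` (of radius `1/(k+1)`) of the `n`-dimensional Hawaiian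
earring, as a subset of `ℝ^{n+1}`. -/
def sphereSet (n k : ℕ) : Set (EuclideanSpace ℝ (Fin (n+1))) :=
  {r | (r 0 - 1/(k+1))^2 + ∑ i ∈ Finset.univ.erase (0 : Fin (n+1)), (r i)^2 = (1/(k+1))^2}

/-- The `n`-dimensional Hawaiian earring
`ℍⁿ = {r ∈ ℝ^{n+1} | (r₀ - 1/k)² + ∑_{i=1}^n rᵢ² = (1/k)², some k ∈ ℕ}`. -/
def hawaiianSet (n : ℕ) : Set (EuclideanSpace ℝ (Fin (n+1))) :=
  ⋃ k : ℕ, sphereSet n k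

/-- The base point `θ = (0, …, 0)` of the Hawaiian earring. -/
def theta (n : ℕ) : EuclideanSpace ℝ (Fin (n+1)) := 0

theorem theta_mem_sphereSet (n k : ℕ) : theta n ∈ sphereSet n k := by
  simp [sphereSet, theta]

theorem sphereSet_subset (n k : ℕ) : sphereSet n k ⊆ hawaiianSet n :=
  Set.subset_iUnion (sphereSet n) k

/-- `θ` as a point of the subspace `ℍⁿ`. -/
def thetaPt (n : ℕ) : ↥(hawaiianSet n) :=
  ⟨theta n, sphereSet_subset n 0 (theta_mem_sphereSet n 0)⟩

/-- The "tail" `⋁̃_{k ≥ m} Sₖⁿ` of the Hawaiian earring: the union of all the spheres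
`Sₖⁿ` with index `k ≥ m`, as a subspace of `ℍⁿ`. -/
def tailSet (n m : ℕ) : Set (EuclideanSpace ℝ (Fin (n+1))) :=
  ⋃ k : ℕ, ⋃ (_ : m ≤ k), sphereSet n k

theorem tailSet_subset (n m : ℕ) : tailSet n m ⊆ hawaiianSet n := by
  intro r hr
  rcases Set.mem_iUnion.mp hr with ⟨k, hk⟩
  rcases Set.mem_iUnion.mp hk with ⟨-, h⟩
  exact sphereSet_subset n k h

theorem theta_mem_tailSet (n m : ℕ) : theta n ∈ tailSet n m :=
  Set.mem_iUnion.mpr ⟨m, Set.mem_iUnion.mpr ⟨le_rfl, theta_mem_sphereSet n m⟩⟩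


end HG

/-! The spheres are closed, cover `ℍⁿ` and shrink to `θ`. In a Hausdorff space covered by such
a family, a neighbourhood of any point other than `θ` meets only finitely many pieces, so a map
that is continuous on each piece is continuous there; at `θ`, continuity of the map is exactly
convergence of the images of the pieces to the image of `θ`, i.e. null-convergence. -/

open Set Filter

section ShrinkingCover

variable {Z X ι : Type*} [TopologicalSpace Z] [TopologicalSpace X] {T : ι → Set Z} {g : Z → X}

theorem ContinuousOn.eventually_mem_imp_of_isClosed {s : Set Z} (hg : ContinuousOn g s)
    (hs : IsClosed s) {p : Z} {U : Set X} (hU : U ∈ 𝓝 (g p)) :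
    ∀ᶠ x in 𝓝 p, x ∈ s → g x ∈ U := by
  by_cases hp : p ∈ s
  · exact mem_nhdsWithin_iff_eventually.1 ((hg p hp).preimage_mem_nhdsWithin hU)
  · filter_upwards [hs.isOpen_compl.mem_nhds hp] with x hx hxs using absurd hxs hx

theorem continuousAt_of_isClosed_cover (hcover : ⋃ i, T i = univ) (hT : ∀ i, IsClosed (T i))
    (hg : ∀ i, ContinuousOn g (T i)) {p : Z}
    (h : ∀ U ∈ 𝓝 (g p), ∃ V ∈ 𝓝 p, ∀ᶠ i in cofinite, MapsTo g (T i ∩ V) U) :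
    ContinuousAt g p := by
  rw [continuousAt_def]
  intro U hU
  obtain ⟨V, hV, hgood⟩ := h U hU
  set bad := {i | ¬ MapsTo g (T i ∩ V) U}
  have hbad : ∀ᶠ x in 𝓝 p, ∀ i ∈ bad, x ∈ T i → g x ∈ U :=
    (eventually_all_finite hgood).2 fun i _ => (hg i).eventually_mem_imp_of_isClosed (hT i) hU
  filter_upwards [hV, hbad] with x hxV hx
  obtain ⟨i, hi⟩ := mem_iUnion.1 (hcover.symm ▸ mem_univ x)
  by_cases hib : i ∈ bad
  · exact hx i hib hi
  · exact not_not.1 hib ⟨hi, hxV⟩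

theorem continuous_iff_tendsto_image_smallSets [T2Space Z] {z₀ : Z}
    (hcover : ⋃ i, T i = univ) (hT : ∀ i, IsClosed (T i)) (hg : ∀ i, ContinuousOn g (T i))
    (hshrink : Tendsto T cofinite (𝓝 z₀).smallSets) :
    Continuous g ↔ Tendsto (fun i => g '' T i) cofinite (𝓝 (g z₀)).smallSets := by
  refine ⟨fun hcont => hcont.continuousAt.image_smallSets.comp hshrink, fun hnull => ?_⟩
  refine continuous_iff_continuousAt.2 fun p => continuousAt_of_isClosed_cover hcover hT hg ?_
  intro U hU
  rcases eq_or_ne p z₀ with rfl | hp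
  · refine ⟨univ, univ_mem, ?_⟩
    filter_upwards [hnull.eventually (eventually_smallSets_subset.2 hU)] with i hi
    exact fun x hx => hi (mem_image_of_mem g hx.1)
  · -- away from `z₀` the pieces are locally finite: some neighbourhood of `p` misses almost all
    -- of them
    obtain ⟨V, hV, W, hW, hVW⟩ := Filter.disjoint_iff.1 (disjoint_nhds_nhds.2 hp)
    refine ⟨V, hV, ?_⟩
    filter_upwards [hshrink.eventually (eventually_smallSets_subset.2 hW)] with i hi
    exact fun x hx => absurd (hi hx.1) (hVW.notMem_of_mem_left hx.2)

end ShrinkingCover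

theorem Filter.Tendsto.preimage_val_smallSets {E ι : Type*} [TopologicalSpace E] {H : Set E}
    {S : ι → Set E} {l : Filter ι} {a : H} (h : Tendsto S l (𝓝 (a : E)).smallSets) :
    Tendsto (fun i => ((↑) : H → E) ⁻¹' S i) l (𝓝 a).smallSets := by
  rw [nhds_subtype, smallSets_comap_eq_comap_image, tendsto_comap_iff]
  exact h.smallSets_mono (Eventually.of_forall fun i => image_preimage_subset _ _)

theorem continuousOn_preimage_val_of_continuous_comp_inclusion {E X : Type*} [TopologicalSpace E]
    [TopologicalSpace X] {s t : Set E} (hst : s ⊆ t) {g : t → X}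
    (hg : Continuous (g ∘ inclusion hst)) : ContinuousOn g (((↑) : t → E) ⁻¹' s) := by
  rw [continuousOn_iff_continuous_domRestrict]
  exact hg.comp ((continuous_subtype_val.comp continuous_subtype_val).subtype_mk fun x => x.2)

namespace HG

theorem sphereSet_eq_sphere (n k : ℕ) :
    sphereSet n k = Metric.sphere (EuclideanSpace.single 0 (1 / (k + 1) : ℝ)) (1 / (k + 1)) := by
  ext r
  rw [mem_sphere_iff_norm, ← sq_eq_sq₀ (norm_nonneg _) (by positivity),
    EuclideanSpace.real_norm_sq_eq, ← Finset.add_sum_erase _ _ (Finset.mem_univ 0)]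
  have hrest : ∑ i ∈ Finset.univ.erase 0,
      (r - EuclideanSpace.single (0 : Fin (n + 1)) (1 / (k + 1) : ℝ)) i ^ 2 =
        ∑ i ∈ Finset.univ.erase 0, r i ^ 2 :=
    Finset.sum_congr rfl fun i hi => by simp [Finset.ne_of_mem_erase hi]
  rw [hrest]
  simp [sphereSet]

theorem isClosed_sphereSet (n k : ℕ) : IsClosed (sphereSet n k) :=
  sphereSet_eq_sphere n k ▸ Metric.isClosed_sphere

theorem sphereSet_subset_closedBall (n k : ℕ) :
    sphereSet n k ⊆ Metric.closedBall 0 (1 / (k + 1) + 1 / (k + 1)) := by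
  rw [sphereSet_eq_sphere]
  refine Metric.sphere_subset_closedBall.trans (Metric.closedBall_subset_closedBall' ?_)
  simp [abs_of_pos (by positivity : (0 : ℝ) < k + 1)]

theorem tendsto_sphereSet_smallSets (n : ℕ) :
    Tendsto (sphereSet n) cofinite (𝓝 0).smallSets := by
  have hradius : Tendsto (fun k : ℕ => 1 / ((k : ℝ) + 1) + 1 / ((k : ℝ) + 1)) cofinite (𝓝 0) := by
    rw [Nat.cofinite_eq_atTop]
    simpa using (tendsto_one_div_add_atTop_nhds_zero_nat (𝕜 := ℝ)).add
      tendsto_one_div_add_atTop_nhds_zero_nat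
  exact ((tendsto_closedBall_smallSets _).comp hradius).smallSets_mono
    (Eventually.of_forall (sphereSet_subset_closedBall n))

theorem iUnion_preimage_val_sphereSet (n : ℕ) :
    ⋃ k, ((↑) : hawaiianSet n → _) ⁻¹' sphereSet n k = univ := by
  rw [← preimage_iUnion]
  exact Subtype.coe_preimage_self _

theorem hawaiian_glued_continuous_iff_nullConvergent_general
    (n : ℕ) (X : Type*) [TopologicalSpace X] (x₀ : X)
    (f : ↥(hawaiianSet n) → X)
    (fk : ∀ k : ℕ, ↥(sphereSet n k) → X)
    (hcont : ∀ k, Continuous (fk k))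
    (hpt : ∀ k, fk k ⟨theta n, theta_mem_sphereSet n k⟩ = x₀)
    (hres : ∀ (k : ℕ) (r : EuclideanSpace ℝ (Fin (n+1))) (hr : r ∈ sphereSet n k),
      f ⟨r, sphereSet_subset n k hr⟩ = fk k ⟨r, hr⟩) :
    Continuous f ↔
      ∀ U : Set X, IsOpen U → x₀ ∈ U → {k : ℕ | ¬ Set.range (fk k) ⊆ U}.Finite := by
  have hfk : ∀ k, fk k = f ∘ inclusion (sphereSet_subset n k) :=
    fun k => funext fun r => (hres k r r.2).symm
  have hθ : f (thetaPt n) = x₀ := (hres 0 _ _).trans (hpt 0)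
  have hclosed : ∀ k, IsClosed (((↑) : hawaiianSet n → _) ⁻¹' sphereSet n k) :=
    fun k => (isClosed_sphereSet n k).preimage continuous_subtype_val
  have hpieces : ∀ k, ContinuousOn f (((↑) : hawaiianSet n → _) ⁻¹' sphereSet n k) := fun k =>
    continuousOn_preimage_val_of_continuous_comp_inclusion _ (hfk k ▸ hcont k)
  have hshrink : Tendsto (fun k => ((↑) : hawaiianSet n → _) ⁻¹' sphereSet n k) cofinite
      (𝓝 (thetaPt n)).smallSets :=
    (tendsto_sphereSet_smallSets n).preimage_val_smallSets
  rw [continuous_iff_tendsto_image_smallSets (iUnion_preimage_val_sphereSet n) hclosed hpieces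
    hshrink, hθ, (nhds_basis_opens x₀).smallSets.tendsto_right_iff]
  have himage : ∀ k, range (fk k) = f '' (((↑) : hawaiianSet n → _) ⁻¹' sphereSet n k) := by
    intro k
    rw [hfk, range_comp, range_inclusion]
    rfl
  simp only [himage, eventually_cofinite, mem_powerset_iff, and_imp]
  exact forall_congr' fun _ => imp.swap

/-- For a sequence of continuous pointed maps `fₖ : (Sₖⁿ, θ) → (X, x₀)`,
the map `f : (ℍⁿ, θ) → (X, x₀)` defined by `f|_{Sₖⁿ} = fₖ` is continuous if and only if
the family `{fₖ}` is null-convergent. -/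
theorem hawaiian_glued_continuous_iff_nullConvergent
    (n : ℕ) (hn : 1 ≤ n) (X : Type*) [TopologicalSpace X] (x₀ : X)
    (f : ↥(hawaiianSet n) → X) (hfθ : f (thetaPt n) = x₀)
    (fk : ∀ k : ℕ, ↥(sphereSet n k) → X)
    (hcont : ∀ k, Continuous (fk k))
    (hpt : ∀ k, fk k ⟨theta n, theta_mem_sphereSet n k⟩ = x₀)
    (hres : ∀ (k : ℕ) (r : EuclideanSpace ℝ (Fin (n+1))) (hr : r ∈ sphereSet n k),
      f ⟨r, sphereSet_subset n k hr⟩ = fk k ⟨r, hr⟩) :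
    Continuous f ↔
      ∀ U : Set X, IsOpen U → x₀ ∈ U → {k : ℕ | ¬ Set.range (fk k) ⊆ U}.Finite :=
  hawaiian_glued_continuous_iff_nullConvergent_general n X x₀ f fk hcont hpt hres

end HG
end
end

section
/- Let (X,x₀) be a pointed topological space and n ≥ 1. Let {f_k, f′_k : (S_k^n, θ) → (X, x₀)}_{k∈ℕ} be two sequences of continuous pointed maps such that for each k there is a homotopy H_k : S_k^n × I → X relative to the base point θ from f_k to f′_k, and the family {H_k}_{k∈ℕ} is null-convergent. Then the map H : ℍ^n × I → X defined by H|_{S_k^n × I} = H_k is a homotopy relative to {θ} from f to f′, where f|_{S_k^n} = f_k and f′|_{S_k^n} = f′_k. -/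
open scoped unitInterval Topology Topology.Homotopy

noncomputable section

open Set Filter

section Topology

variable {Z X ι : Type*} [TopologicalSpace Z] [TopologicalSpace X]

theorem continuousAt_of_iUnion_eq_univ_of_finite_not_mapsTo {g : Z → X} {A : ι → Set Z} {z₀ : Z}
    (hcover : ⋃ k, A k = univ) (hcont : ∀ k, ContinuousWithinAt g (A k) z₀)
    (hnull : ∀ U : Set X, IsOpen U → g z₀ ∈ U → {k | ¬ MapsTo g (A k) U}.Finite) :
    ContinuousAt g z₀ := by
  rw [ContinuousAt, tendsto_nhds]
  intro U hU hz₀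
  have hbad : ∀ᶠ z in 𝓝 z₀, ∀ k ∈ {k | ¬ MapsTo g (A k) U}, z ∈ A k → g z ∈ U :=
    (eventually_all_finite (hnull U hU hz₀)).2 fun k _ =>
      mem_nhdsWithin_iff_eventually.1 ((hcont k).preimage_mem_nhdsWithin (hU.mem_nhds hz₀))
  filter_upwards [hbad] with z hz
  obtain ⟨k, hk⟩ := mem_iUnion.1 (hcover.symm ▸ mem_univ z : z ∈ ⋃ k, A k)
  by_cases hgood : MapsTo g (A k) U
  · exact hgood hk
  · exact hz k hgood hk

end Topology

namespace HG

theorem mem_sphereSet_iff {n k : ℕ} {r : EuclideanSpace ℝ (Fin (n+1))} :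
    r ∈ sphereSet n k ↔ ‖r‖ ^ 2 = 2 / (k+1) * r 0 := by
  have hnorm : ‖r‖ ^ 2 = r 0 ^ 2 + ∑ i ∈ Finset.univ.erase (0 : Fin (n+1)), r i ^ 2 := by
    rw [EuclideanSpace.real_norm_sq_eq, Finset.add_sum_erase _ (fun i => r i ^ 2) (Finset.mem_univ 0)]
  rw [sphereSet, mem_ofPred, hnorm]
  constructor <;> intro h <;> linear_combination h

theorem norm_le_of_mem_sphereSet {n k : ℕ} {r : EuclideanSpace ℝ (Fin (n+1))}
    (hr : r ∈ sphereSet n k) : ‖r‖ ≤ 2 / (k+1) := by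
  have hr0 : r 0 ≤ ‖r‖ := (le_abs_self _).trans (PiLp.norm_apply_le r 0)
  have hk : (0 : ℝ) < 2 / (k+1) := by positivity
  nlinarith [mem_sphereSet_iff.1 hr, norm_nonneg r]

theorem eq_theta_of_mem_sphereSet_of_mem_sphereSet {n j k : ℕ} (hjk : j ≠ k)
    {r : EuclideanSpace ℝ (Fin (n+1))} (hj : r ∈ sphereSet n j) (hk : r ∈ sphereSet n k) :
    r = theta n := by
  have hne : (2 : ℝ) / (j+1) ≠ 2 / (k+1) := by
    rw [Ne, div_eq_div_iff (by positivity) (by positivity)]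
    exact fun h => hjk (by exact_mod_cast (by linarith : (j : ℝ) = k))
  have hr0 : r 0 = 0 := by
    have h : (2 / ((j : ℝ) + 1) - 2 / (k+1)) * r 0 = 0 := by
      linear_combination (mem_sphereSet_iff.1 hk) - (mem_sphereSet_iff.1 hj)
    exact (mul_eq_zero.1 h).resolve_left (sub_ne_zero.2 hne)
  have := mem_sphereSet_iff.1 hj
  rw [hr0, mul_zero, sq_eq_zero_iff, norm_eq_zero] at this
  exact this

theorem sphereSet_mem_nhdsWithin_hawaiianSet {n k : ℕ} {p : EuclideanSpace ℝ (Fin (n+1))}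
    (hp : p ∈ sphereSet n k) (hpθ : p ≠ theta n) : sphereSet n k ∈ 𝓝[hawaiianSet n] p := by
  obtain ⟨N, hN⟩ : ∃ N : ℕ, 2 / ((N : ℝ) + 1) < ‖p‖ := by
    have hp0 : 0 < ‖p‖ := norm_pos_iff.2 hpθ
    obtain ⟨N, hN⟩ := exists_nat_gt (2 / ‖p‖)
    rw [div_lt_iff₀ hp0] at hN
    exact ⟨N, (div_lt_iff₀ (by positivity)).2 (by nlinarith)⟩
  have hfar : ∀ᶠ r in 𝓝 p, 2 / ((N : ℝ) + 1) < ‖r‖ :=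
    continuous_norm.continuousAt.eventually (lt_mem_nhds hN)
  have hoff : ∀ᶠ r in 𝓝 p, ∀ j ∈ (Finset.range N).erase k, r ∉ sphereSet n j :=
    (eventually_all_finset _).2 fun j hj => (isClosed_sphereSet n j).compl_mem_nhds
      fun hpj => hpθ (eq_theta_of_mem_sphereSet_of_mem_sphereSet (Finset.ne_of_mem_erase hj) hpj hp)
  rw [mem_nhdsWithin_iff_eventually]
  filter_upwards [hfar, hoff] with r hr hr' hrH
  obtain ⟨j, hj⟩ := mem_iUnion.1 hrH
  rcases eq_or_ne j k with rfl | hjk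
  · exact hj
  by_cases hjN : j < N
  · exact absurd hj (hr' j (Finset.mem_erase.2 ⟨hjk, Finset.mem_range.2 hjN⟩))
  · have : 2 / ((j : ℝ) + 1) ≤ 2 / ((N : ℝ) + 1) := by
      gcongr; exact_mod_cast not_lt.1 hjN
    exact absurd (norm_le_of_mem_sphereSet hj) (by linarith)

def cylinderPiece (n k : ℕ) : Set (↥(hawaiianSet n) × I) :=
  (Subtype.val ⁻¹' sphereSet n k) ×ˢ univ

theorem iUnion_cylinderPiece (n : ℕ) : ⋃ k, cylinderPiece n k = univ :=
  eq_univ_of_forall fun z => mem_iUnion.2 <|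
    (mem_iUnion.1 z.1.2).imp fun _ hk => ⟨hk, mem_univ _⟩

theorem cylinderPiece_mem_nhds {n k : ℕ} {p : ↥(hawaiianSet n)} (hp : p.1 ∈ sphereSet n k)
    (hpθ : p.1 ≠ theta n) (t : I) : cylinderPiece n k ∈ 𝓝 (p, t) :=
  prod_mem_nhds (preimage_coe_mem_nhds_subtype.2 (sphereSet_mem_nhdsWithin_hawaiianSet hp hpθ))
    univ_mem

section Gluing

variable {n k : ℕ} {X : Type*} {Hk : ↥(sphereSet n k) × I → X}
  {H : ↥(hawaiianSet n) × I → X}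

theorem continuousOn_cylinderPiece [TopologicalSpace X] (hHk : Continuous Hk)
    (hHres : ∀ (r : EuclideanSpace ℝ (Fin (n+1))) (hr : r ∈ sphereSet n k) (t : I),
      H (⟨r, sphereSet_subset n k hr⟩, t) = Hk (⟨r, hr⟩, t)) :
    ContinuousOn H (cylinderPiece n k) := by
  rw [continuousOn_iff_continuous_domRestrict]
  have : (cylinderPiece n k).domRestrict H = fun z => Hk (⟨z.1.1.1, z.2.1⟩, z.1.2) :=
    funext fun z => hHres z.1.1.1 z.2.1 z.1.2
  rw [this]
  fun_prop

theorem mapsTo_cylinderPiece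
    (hHres : ∀ (r : EuclideanSpace ℝ (Fin (n+1))) (hr : r ∈ sphereSet n k) (t : I),
      H (⟨r, sphereSet_subset n k hr⟩, t) = Hk (⟨r, hr⟩, t))
    {U : Set X} (hU : range Hk ⊆ U) : MapsTo H (cylinderPiece n k) U :=
  fun z hz => hHres z.1.1 hz.1 z.2 ▸ hU (mem_range_self _)

end Gluing

theorem hawaiian_glued_homotopy_general
    (n : ℕ) (X : Type*) [TopologicalSpace X] (x₀ : X)
    (f f' : ↥(hawaiianSet n) → X)
    (fk f'k : ∀ k : ℕ, ↥(sphereSet n k) → X)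
    (hres : ∀ (k : ℕ) (r : EuclideanSpace ℝ (Fin (n+1))) (hr : r ∈ sphereSet n k),
      f ⟨r, sphereSet_subset n k hr⟩ = fk k ⟨r, hr⟩)
    (hres' : ∀ (k : ℕ) (r : EuclideanSpace ℝ (Fin (n+1))) (hr : r ∈ sphereSet n k),
      f' ⟨r, sphereSet_subset n k hr⟩ = f'k k ⟨r, hr⟩)
    (Hk : ∀ k : ℕ, ↥(sphereSet n k) × I → X)
    (hHcont : ∀ k, Continuous (Hk k))
    (hH0 : ∀ k s, Hk k (s, 0) = fk k s)
    (hH1 : ∀ k s, Hk k (s, 1) = f'k k s)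
    (hHrel : ∀ k (t : I), Hk k (⟨theta n, theta_mem_sphereSet n k⟩, t) = x₀)
    (hHnull : ∀ U : Set X, IsOpen U → x₀ ∈ U →
      {k : ℕ | ¬ Set.range (Hk k) ⊆ U}.Finite)
    (H : ↥(hawaiianSet n) × I → X)
    (hHres : ∀ (k : ℕ) (r : EuclideanSpace ℝ (Fin (n+1))) (hr : r ∈ sphereSet n k) (t : I),
      H (⟨r, sphereSet_subset n k hr⟩, t) = Hk k (⟨r, hr⟩, t)) :
    Continuous H ∧ (∀ s, H (s, 0) = f s) ∧ (∀ s, H (s, 1) = f' s) ∧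
      (∀ t : I, H (thetaPt n, t) = x₀) := by
  have hθ (t : I) : H (thetaPt n, t) = x₀ := (hHres 0 _ _ t).trans (hHrel 0 t)
  refine ⟨continuous_iff_continuousAt.2 fun ⟨p, t⟩ => ?_, fun ⟨s, hs⟩ => ?_,
    fun ⟨s, hs⟩ => ?_, hθ⟩
  · by_cases hp : p.1 = theta n
    · obtain rfl : p = thetaPt n := Subtype.ext hp
      refine continuousAt_of_iUnion_eq_univ_of_finite_not_mapsTo (iUnion_cylinderPiece n)
        (fun k => (continuousOn_cylinderPiece (hHcont k) (hHres k)).continuousWithinAt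
          ⟨theta_mem_sphereSet n k, mem_univ t⟩) fun U hU hxU => ?_
      exact (hHnull U hU (hθ t ▸ hxU)).subset fun k hk hsub =>
        hk (mapsTo_cylinderPiece (hHres k) hsub)
    · obtain ⟨k, hk⟩ := mem_iUnion.1 p.2
      exact (continuousOn_cylinderPiece (hHcont k) (hHres k)).continuousAt
        (cylinderPiece_mem_nhds hk hp t)
  · obtain ⟨k, hk⟩ := mem_iUnion.1 hs
    exact (hHres k s hk 0).trans ((hH0 k _).trans (hres k s hk).symm)
  · obtain ⟨k, hk⟩ := mem_iUnion.1 hs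
    exact (hHres k s hk 1).trans ((hH1 k _).trans (hres' k s hk).symm)

/-- If `{fₖ}, {f'ₖ}` are sequences of continuous pointed maps
`(Sₖⁿ, θ) → (X, x₀)` and `Hₖ : Sₖⁿ × I → X` are homotopies rel `{θ}` from `fₖ` to `f'ₖ`
forming a null-convergent family, then the glued map `H : ℍⁿ × I → X` with
`H|_{Sₖⁿ × I} = Hₖ` is a homotopy rel `{θ}` from `f` to `f'`, where `f|_{Sₖⁿ} = fₖ`
and `f'|_{Sₖⁿ} = f'ₖ`. -/
theorem hawaiian_glued_homotopy
    (n : ℕ) (hn : 1 ≤ n) (X : Type*) [TopologicalSpace X] (x₀ : X)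
    (f f' : ↥(hawaiianSet n) → X)
    (fk f'k : ∀ k : ℕ, ↥(sphereSet n k) → X)
    (hcont : ∀ k, Continuous (fk k)) (hcont' : ∀ k, Continuous (f'k k))
    (hpt : ∀ k, fk k ⟨theta n, theta_mem_sphereSet n k⟩ = x₀)
    (hpt' : ∀ k, f'k k ⟨theta n, theta_mem_sphereSet n k⟩ = x₀)
    (hres : ∀ (k : ℕ) (r : EuclideanSpace ℝ (Fin (n+1))) (hr : r ∈ sphereSet n k),
      f ⟨r, sphereSet_subset n k hr⟩ = fk k ⟨r, hr⟩)
    (hres' : ∀ (k : ℕ) (r : EuclideanSpace ℝ (Fin (n+1))) (hr : r ∈ sphereSet n k),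
      f' ⟨r, sphereSet_subset n k hr⟩ = f'k k ⟨r, hr⟩)
    (Hk : ∀ k : ℕ, ↥(sphereSet n k) × I → X)
    (hHcont : ∀ k, Continuous (Hk k))
    (hH0 : ∀ k s, Hk k (s, 0) = fk k s)
    (hH1 : ∀ k s, Hk k (s, 1) = f'k k s)
    (hHrel : ∀ k (t : I), Hk k (⟨theta n, theta_mem_sphereSet n k⟩, t) = x₀)
    (hHnull : ∀ U : Set X, IsOpen U → x₀ ∈ U →
      {k : ℕ | ¬ Set.range (Hk k) ⊆ U}.Finite)
    (H : ↥(hawaiianSet n) × I → X)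
    (hHres : ∀ (k : ℕ) (r : EuclideanSpace ℝ (Fin (n+1))) (hr : r ∈ sphereSet n k) (t : I),
      H (⟨r, sphereSet_subset n k hr⟩, t) = Hk k (⟨r, hr⟩, t)) :
    Continuous H ∧ (∀ s, H (s, 0) = f s) ∧ (∀ s, H (s, 1) = f' s) ∧
      (∀ t : I, H (thetaPt n, t) = x₀) :=
  hawaiian_glued_homotopy_general n X x₀ f f' fk f'k hres hres' Hk hHcont hH0 hH1 hHrel hHnull H
    hHres

end HG
end
end
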